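/- Lower bound for splits induced by extended patterns (Theorem 2 of the paper, abstract form): let A and B be finite multisets of reals. For every sub-multiset S ⊆ A with |S| = k (0 < k < |A|), TSS(A∖S) + TSS(B∪S) ≥ min over k' ∈ {1,...,|A|−1} and choice of S' being the k' largest or k' smallest elements of A, of TSS(A∖S') + TSS(B∪S'). Consequently if all support sets of descendant patterns are sub-multisets obtained by removing some S from A and adding it to B, the displayed minimum bounds their split criterion from below. -/

import Mathlib

/-- Total sum of squares (with the 1/2 factor) of a finite multiset of reals;
`tss 0 = 0`. -/
noncomputable def tss (X : Multiset ℝ) : ℝ :=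
  (1 / 2) * (X.map (fun x => (x - X.sum / X.card) ^ 2)).sum

/-! Moving a sub-multiset `T` of size `k` from `A` to `B` turns the criterion
`tss (A - T) + tss (B + T)` into a function of `T.sum` alone: a constant minus a nonnegative
combination of the squares `(A.sum - T.sum)²` and `(B.sum + T.sum)²`, hence concave in `T.sum`.
Over all such `T`, `T.sum` lies between the sums of the `k` smallest and the `k` largest
elements of `A`, so the criterion is at least the smaller of its values at these two choices. -/

namespace List

variable {α : Type*} [AddCommMonoid α] [PartialOrder α] [IsOrderedAddMonoid α]

theorem Pairwise.sum_take_cons_le_sum_take {a : α} {l : List α} {n : ℕ}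
    (hl : (a :: l).Pairwise (· ≤ ·)) (hn : n ≤ l.length) :
    ((a :: l).take n).sum ≤ (l.take n).sum := by
  induction l generalizing a n with
  | nil => simp_all
  | cons b l ih =>
    cases n with
    | zero => simp
    | succ m =>
      simp only [take_succ_cons, sum_cons]
      exact add_le_add (rel_of_pairwise_cons hl mem_cons_self) (ih hl.of_cons (by simpa using hn))

theorem Pairwise.sum_take_le_sum_of_sublist {s l : List α} (hl : l.Pairwise (· ≤ ·))
    (hs : s <+ l) : (l.take s.length).sum ≤ s.sum := by
  induction hs with
  | slnil => simp
  | cons a hs ih => exact (hl.sum_take_cons_le_sum_take hs.length_le).trans (ih hl.of_cons)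
  | cons_cons a hs ih =>
    simpa only [length_cons, take_succ_cons, sum_cons] using add_le_add le_rfl (ih hl.of_cons)

theorem Pairwise.sum_le_sum_drop_of_sublist {s l : List α} (hl : l.Pairwise (· ≤ ·))
    (hs : s <+ l) : s.sum ≤ (l.drop (l.length - s.length)).sum := by
  have h : s.reverse.sum ≤ (l.reverse.take s.reverse.length).sum :=
    Pairwise.sum_take_le_sum_of_sublist (α := αᵒᵈ) (pairwise_reverse.2 hl) hs.reverse
  rwa [length_reverse, take_reverse, sum_reverse, sum_reverse] at h

end List

namespace Multiset

variable {α : Type*} [LinearOrder α]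

theorem sort_sublist_sort {S A : Multiset α} (hS : S ≤ A) :
    (S.sort (· ≤ ·)).Sublist (A.sort (· ≤ ·)) :=
  List.sublist_of_subperm_of_pairwise (by rwa [← coe_le, sort_eq, sort_eq])
    (pairwise_sort _ _) (pairwise_sort _ _)

variable [AddCommMonoid α]

theorem sum_sort (S : Multiset α) : (S.sort (· ≤ ·)).sum = S.sum := by
  rw [← sum_coe, sort_eq]

variable [IsOrderedAddMonoid α]

theorem sum_take_sort_le_sum {S A : Multiset α} (hS : S ≤ A) :
    ((A.sort (· ≤ ·)).take S.card).sum ≤ S.sum := by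
  have h := (pairwise_sort A _).sum_take_le_sum_of_sublist (sort_sublist_sort hS)
  rwa [length_sort, sum_sort] at h

theorem sum_le_sum_drop_sort {S A : Multiset α} (hS : S ≤ A) :
    S.sum ≤ ((A.sort (· ≤ ·)).drop (A.card - S.card)).sum := by
  have h := (pairwise_sort A _).sum_le_sum_drop_of_sublist (sort_sublist_sort hS)
  rwa [length_sort, length_sort, sum_sort] at h

end Multiset

theorem tss_eq_half_sum_sq_sub (X : Multiset ℝ) :
    tss X = (1 / 2) * ((X.map (· ^ 2)).sum - X.sum ^ 2 / X.card) := by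
  rcases eq_or_ne X 0 with rfl | hX
  · simp [tss]
  have hc : (X.card : ℝ) ≠ 0 := by simpa using hX
  set m := X.sum / X.card
  have h : ∀ x, (x - m) ^ 2 = x ^ 2 - x * (2 * m) + m ^ 2 := fun x => by ring
  simp only [tss, h, Multiset.sum_map_add, Multiset.sum_map_sub, Multiset.sum_map_mul_right,
    Multiset.map_id', Multiset.map_const', Multiset.sum_replicate, nsmul_eq_mul, m]
  field_simp
  ring

noncomputable def splitTSS (A B : Multiset ℝ) (k : ℕ) (t : ℝ) : ℝ :=
  (1 / 2) * ((A.map (· ^ 2)).sum + (B.map (· ^ 2)).sum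
    - ((A.sum - t) ^ 2 / (A.card - k) + (B.sum + t) ^ 2 / (B.card + k)))

theorem tss_sub_add_tss_add {A T : Multiset ℝ} (B : Multiset ℝ) (hT : T ≤ A) :
    tss (A - T) + tss (B + T) = splitTSS A B T.card T.sum := by
  obtain ⟨R, rfl⟩ := Multiset.le_iff_exists_add.1 hT
  rw [add_tsub_cancel_left, tss_eq_half_sum_sq_sub, tss_eq_half_sum_sq_sub, splitTSS]
  simp only [Multiset.map_add, Multiset.sum_add, Multiset.card_add, Nat.cast_add]
  ring

theorem concaveOn_splitTSS (A B : Multiset ℝ) {k : ℕ} (hk : k ≤ A.card) :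
    ConcaveOn ℝ Set.univ (splitTSS A B k) := by
  have hsq (c : ℝ) : ConvexOn ℝ Set.univ fun t : ℝ => (c + t) ^ 2 := by
    simpa [Function.comp_def] using (even_two.convexOn_pow (𝕜 := ℝ)).translate_right c
  have hA : (0 : ℝ) ≤ (A.card - k : ℝ)⁻¹ := inv_nonneg.2 (sub_nonneg.2 (by exact_mod_cast hk))
  have hB : (0 : ℝ) ≤ (B.card + k : ℝ)⁻¹ := by positivity
  have h := (((hsq (-A.sum)).smul hA).add ((hsq B.sum).smul hB)).neg.add_const
    ((A.map (· ^ 2)).sum + (B.map (· ^ 2)).sum) |>.smul (by norm_num : (0 : ℝ) ≤ 1 / 2)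
  refine h.congr fun t _ => ?_
  simp only [splitTSS, Pi.add_apply, Pi.neg_apply, smul_eq_mul]
  ring

/-- Lower bound for splits induced by extended patterns: for every
sub-multiset `S ⊆ A` with `0 < |S| < |A|`, the criterion
`TSS(A∖S) + TSS(B∪S)` is bounded below by the minimum, over sizes `k'` and
over choosing the `k'` smallest or `k'` largest elements of `A`, of the same
quantity. -/
theorem tss_split_lower_bound (A B S : Multiset ℝ)
    (hS : S ≤ A) (hk0 : 0 < S.card) (hkn : S.card < A.card) :
    ((Finset.Icc 1 (A.card - 1)).inf'
        (Finset.nonempty_Icc.mpr (by omega))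
        (fun k' =>
          min
            (tss (A - ↑((A.sort (· ≤ ·)).take k'))
              + tss (B + ↑((A.sort (· ≤ ·)).take k')))
            (tss (A - ↑((A.sort (· ≤ ·)).drop (A.card - k')))
              + tss (B + ↑((A.sort (· ≤ ·)).drop (A.card - k'))))))
      ≤ tss (A - S) + tss (B + S) := by
  set l := A.sort (· ≤ ·)
  have hlen : l.length = A.card := A.length_sort _
  have hk : S.card ∈ Finset.Icc 1 (A.card - 1) := Finset.mem_Icc.2 ⟨hk0, by omega⟩
  have hsmallest : (↑(l.take S.card) : Multiset ℝ) ≤ A :=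
    (Multiset.coe_le.2 (l.take_sublist _).subperm).trans_eq (A.sort_eq _)
  have hlargest : (↑(l.drop (A.card - S.card)) : Multiset ℝ) ≤ A :=
    (Multiset.coe_le.2 (l.drop_sublist _).subperm).trans_eq (A.sort_eq _)
  have hsmallest_card : (↑(l.take S.card) : Multiset ℝ).card = S.card := by
    simp only [Multiset.coe_card, List.length_take, hlen]; omega
  have hlargest_card : (↑(l.drop (A.card - S.card)) : Multiset ℝ).card = S.card := by
    simp only [Multiset.coe_card, List.length_drop, hlen]; omega
  refine (Finset.inf'_le _ hk).trans ?_
  rw [tss_sub_add_tss_add B hS, tss_sub_add_tss_add B hsmallest, tss_sub_add_tss_add B hlargest,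
    hsmallest_card, hlargest_card]
  exact (concaveOn_splitTSS A B hkn.le).min_le_of_mem_Icc trivial trivial
    ⟨Multiset.sum_take_sort_le_sum hS, Multiset.sum_le_sum_drop_sort hS⟩
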